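/- arXiv:1601.02724 — 6 statements merged into one kernel-verified Lean document; each statement's English description precedes it below -/
import Mathlib

section
/- If X = (x, y, z) : ℝ → ℝ³ is a solution of the 1-1-1 ABC flow system and c ∈ ℝ, then the curve t ↦ (-x(c - t), y(c - t), π - z(c - t)) is also a solution of the 1-1-1 ABC flow system. -/
open Real Set Filter

/-- A solution of the 1-1-1 ABC flow system. -/
def IsABCSol (x y z : ℝ → ℝ) : Prop :=
  ∀ t : ℝ,
    HasDerivAt x (Real.sin (z t) + Real.cos (y t)) t ∧
    HasDerivAt y (Real.sin (x t) + Real.cos (z t)) t ∧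
    HasDerivAt z (Real.sin (y t) + Real.cos (x t)) t

/-! The involution `S (x, y, z) = (-x, y, π - z)` reverses the ABC vector field `F`:
`F (S p) = -S' (F p)` with `S'` the linear part of `S`, because `sin` is odd, `cos` is even,
`sin (π - z) = sin z` and `cos (π - z) = -cos z`. So `S` composed with time reversal maps
solutions to solutions. -/

theorem stmt5 (x y z : ℝ → ℝ) (h : IsABCSol x y z) (c : ℝ) :
    IsABCSol (fun t => -x (c - t)) (fun t => y (c - t)) (fun t => π - z (c - t)) := by
  intro t
  obtain ⟨hx, hy, hz⟩ := h (c - t)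
  refine ⟨?_, ?_, ?_⟩
  · refine (hx.comp_const_sub c t).neg.congr_deriv ?_
    dsimp only
    rw [sin_pi_sub]
    ring
  · refine (hy.comp_const_sub c t).congr_deriv ?_
    dsimp only
    rw [sin_neg, cos_pi_sub]
    ring
  · refine ((hz.comp_const_sub c t).const_sub π).congr_deriv ?_
    dsimp only
    rw [cos_neg]
    ring
end

section
/- Let X = (x, y, z) : ℝ → ℝ³ be a solution of the 1-1-1 ABC flow system with X(0) = (-π/2, 0, a) for some a ∈ [0, π/2), and let T > 0 be such that X(t) ∈ D̄ for all t ∈ [0, T]. Then y(t) < π/4 for all t ∈ [0, T]. -/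
open Real Set Filter

/-- The open triangle `R` in the `xy`-plane with vertices `(0, -π/2)`, `(0, 3π/2)`, `(-π, π/2)`. -/
def triR : Set (ℝ × ℝ) :=
  {p | -(Real.pi / 2) < p.1 + p.2 ∧ p.2 - p.1 < 3 * Real.pi / 2 ∧ p.1 < 0}

/-- The open prism `D = R × (0, π/2)` in `ℝ³`. -/
def prismD : Set (ℝ × ℝ × ℝ) :=
  {p | (p.1, p.2.1) ∈ triR ∧ 0 < p.2.2 ∧ p.2.2 < Real.pi / 2}

lemma closure_prismD_subset :
    closure prismD ⊆ {p : ℝ × ℝ × ℝ |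
      -(π / 2) ≤ p.1 + p.2.1 ∧ p.1 ≤ 0 ∧ 0 ≤ p.2.2 ∧ p.2.2 ≤ π / 2} := by
  refine closure_minimal ?_ ?_
  · rintro ⟨px, py, pz⟩ ⟨⟨hxy, -, hx⟩, hz₀, hz₁⟩
    exact ⟨hxy.le, hx.le, hz₀.le, hz₁.le⟩
  · simp only [ofPred_and]
    exact (isClosed_le continuous_const (continuous_fst.add continuous_snd.fst)).inter
      ((isClosed_le continuous_fst continuous_const).inter
      ((isClosed_le continuous_const continuous_snd.snd).inter
      (isClosed_le continuous_snd.snd continuous_const)))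

lemma exists_first_eq_of_lt_of_le {f : ℝ → ℝ} (hf : Continuous f) {a t c : ℝ}
    (hfa : f a < c) (hat : a ≤ t) (hft : c ≤ f t) :
    ∃ s ∈ Ioc a t, f s = c ∧ ∀ r ∈ Ico a s, f r < c := by
  set S := Icc a t ∩ {r | c ≤ f r}
  have hS : IsClosed S := isClosed_Icc.inter (isClosed_le continuous_const hf)
  have hbdd : BddBelow S := ⟨a, fun r hr => hr.1.1⟩
  obtain ⟨⟨has, hst⟩, hcs⟩ : sInf S ∈ S := hS.csInf_mem ⟨t, ⟨hat, le_rfl⟩, hft⟩ hbdd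
  have hne : a ≠ sInf S := fun h => (h ▸ hfa).not_ge hcs
  have hbelow : ∀ r ∈ Ico a (sInf S), f r < c := fun r hr => not_le.1 fun hcr =>
    (csInf_le hbdd ⟨⟨hr.1, hr.2.le.trans hst⟩, hcr⟩).not_gt hr.2
  have hsc : f (sInf S) ≤ c :=
    (isClosed_le hf continuous_const).closure_subset_iff.2 (fun r hr => (hbelow r hr).le)
      (by rw [closure_Ico hne]; exact right_mem_Icc.2 has)
  exact ⟨sInf S, ⟨lt_of_le_of_ne has hne, hst⟩, le_antisymm hsc hcs, hbelow⟩

noncomputable def abcLyapunov (p q : ℝ) : ℝ := p - cos p - sin q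

lemma IsABCSol.hasDerivAt_abcLyapunov {x y z : ℝ → ℝ} (h : IsABCSol x y z) (t : ℝ) :
    HasDerivAt (fun t => abcLyapunov (x t) (y t))
      ((1 + sin (x t)) * sin (z t) + (1 - cos (z t)) * cos (y t)) t := by
  obtain ⟨hx, hy, -⟩ := h t
  exact ((hx.sub ((hasDerivAt_cos (x t)).comp t hx)).sub
    ((hasDerivAt_sin (y t)).comp t hy)).congr_deriv (by ring)

lemma abcLyapunov_deriv_nonneg (p q r : ℝ) (hr : 0 ≤ sin r) (hq : 0 ≤ cos q) :
    0 ≤ (1 + sin p) * sin r + (1 - cos r) * cos q :=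
  add_nonneg (mul_nonneg (by linarith [neg_one_le_sin p]) hr)
    (mul_nonneg (by linarith [cos_le_one r]) hq)

lemma IsABCSol.monotoneOn_abcLyapunov {x y z : ℝ → ℝ} (h : IsABCSol x y z) {a b : ℝ}
    (hyz : ∀ t ∈ Ioo a b, 0 ≤ sin (z t) ∧ 0 ≤ cos (y t)) :
    MonotoneOn (fun t => abcLyapunov (x t) (y t)) (Icc a b) := by
  refine monotoneOn_of_hasDerivWithinAt_nonneg (convex_Icc a b)
    (fun t _ => (h.hasDerivAt_abcLyapunov t).continuousAt.continuousWithinAt)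
    (fun t _ => (h.hasDerivAt_abcLyapunov t).hasDerivWithinAt) fun t ht => ?_
  rw [interior_Icc] at ht
  exact abcLyapunov_deriv_nonneg _ _ _ (hyz t ht).1 (hyz t ht).2

lemma sub_cos_le_neg_one_of_nonpos {u : ℝ} (hu : u ≤ 0) : u - cos u ≤ -1 := by
  have hmono : Monotone (fun u : ℝ => u - cos u) :=
    monotone_of_hasDerivAt_nonneg (fun u => (hasDerivAt_id' u).sub (hasDerivAt_cos u))
      fun u => show (0 : ℝ) ≤ 1 - -sin u by linarith [neg_one_le_sin u]
  simpa using hmono hu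

lemma abcLyapunov_pi_div_four_lt {p : ℝ} (hp : p ≤ 0) : abcLyapunov p (π / 4) < -(π / 2) := by
  have hsqrt : (1.4 : ℝ) ≤ √2 := by
    nlinarith [sq_sqrt (zero_le_two : (0 : ℝ) ≤ 2), sqrt_nonneg 2]
  rw [abcLyapunov, sin_pi_div_four]
  linarith [sub_cos_le_neg_one_of_nonpos hp, pi_lt_d2]

theorem stmt6_general (x y z : ℝ → ℝ) (h : IsABCSol x y z)
    (hx0 : x 0 = -(π / 2)) (hy0 : y 0 = 0)
    (T : ℝ) (hD : ∀ t ∈ Set.Icc 0 T, (x t, y t, z t) ∈ closure prismD) :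
    ∀ t ∈ Set.Icc 0 T, y t < π / 4 := by
  intro t ht
  by_contra! hyt
  have hy : Continuous y := continuous_iff_continuousAt.2 fun t => (h t).2.1.continuousAt
  obtain ⟨s, hs, hys, hbelow⟩ :=
    exists_first_eq_of_lt_of_le hy (by rw [hy0]; positivity) ht.1 hyt
  have hsT : Icc 0 s ⊆ Icc 0 T := Icc_subset_Icc le_rfl (hs.2.trans ht.2)
  have hbounds := fun r (hr : r ∈ Icc 0 s) => closure_prismD_subset (hD r (hsT hr))
  have hmono := h.monotoneOn_abcLyapunov fun r hr => by
    obtain ⟨hxy, hx, hz₀, hz₁⟩ := hbounds r (Ioo_subset_Icc_self hr)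
    have hyr := hbelow r (Ioo_subset_Ico_self hr)
    exact ⟨sin_nonneg_of_nonneg_of_le_pi hz₀ (by linarith [pi_pos]),
      cos_nonneg_of_mem_Icc ⟨by linarith, by linarith⟩⟩
  have hle : abcLyapunov (x 0) (y 0) ≤ abcLyapunov (x s) (y s) :=
    hmono (left_mem_Icc.2 hs.1.le) (right_mem_Icc.2 hs.1.le) hs.1.le
  have hstart : abcLyapunov (x 0) (y 0) = -(π / 2) := by
    simp [abcLyapunov, hx0, hy0]
  have hend := abcLyapunov_pi_div_four_lt (hbounds s (right_mem_Icc.2 hs.1.le)).2.1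
  rw [hys] at hle
  linarith

theorem stmt6 (x y z : ℝ → ℝ) (h : IsABCSol x y z) (a : ℝ) (ha : a ∈ Set.Ico 0 (π / 2))
    (hx0 : x 0 = -(π / 2)) (hy0 : y 0 = 0) (hz0 : z 0 = a)
    (T : ℝ) (hT : 0 < T) (hD : ∀ t ∈ Set.Icc 0 T, (x t, y t, z t) ∈ closure prismD) :
    ∀ t ∈ Set.Icc 0 T, y t < π / 4 :=
  stmt6_general x y z h hx0 hy0 T hD
end

section
/- Let X = (x, y, z) : ℝ → ℝ³ be a solution of the 1-1-1 ABC flow system with X(0) = (-π/2, 0, 0), and let T > 0 be such that X(t) ∈ D̄ for all t ∈ [0, T]. Then x(t) + π/2 > z(t) for all t ∈ (0, T]. -/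
/-!
Along the flow, `K = sin y + cos x - x` has derivative `cos y (cos z - 1) - (1 + sin x) sin z`,
which is `≤ 0` while `cos y ≥ 0` and `0 ≤ z ≤ π/2`. Since `K(0) = π/2` and `x - cos x ≤ -1`
for `x ≤ 0`, up to the first time `y` reaches `π/4` we get `sin y ≤ π/2 - 1 < sin (π/4)`;
hence `y < π/4` throughout. On the plane `z = x + π/2` the function `w = x + π/2 - z` has
derivative `cos y - sin y > 0`, so `w`, which vanishes at `t = 0`, stays positive afterwards.
-/

open Real Set Filter

theorem ContinuousOn.forall_lt_of_forall_ne {f : ℝ → ℝ} {a b c : ℝ}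
    (hf : ContinuousOn f (Icc a b)) (ha : f a < c)
    (h : ∀ t ∈ Ioc a b, (∀ s ∈ Ico a t, f s < c) → f t ≠ c) :
    ∀ t ∈ Icc a b, f t < c := by
  by_contra! hS
  set S := Icc a b ∩ f ⁻¹' Ici c
  have hSne : S.Nonempty := hS
  have hSbdd : BddBelow S := ⟨a, fun s hs => hs.1.1⟩
  have hmem : sInf S ∈ S := (hf.preimage_isClosed_of_isClosed isClosed_Icc isClosed_Ici).csInf_mem
    hSne hSbdd
  have hbefore : ∀ s ∈ Ico a (sInf S), f s < c := fun s hs => not_le.1 fun hcs =>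
    hs.2.not_ge (csInf_le hSbdd ⟨⟨hs.1, hs.2.le.trans hmem.1.2⟩, hcs⟩)
  have hpos : a < sInf S := hmem.1.1.lt_of_ne fun hEq => (hEq ▸ hmem.2 : c ≤ f a).not_gt ha
  refine h _ ⟨hpos, hmem.1.2⟩ hbefore (le_antisymm ?_ hmem.2)
  by_contra! hlt
  obtain ⟨s, hs, hfs⟩ :=
    intermediate_value_Ioo hpos.le (hf.mono (Icc_subset_Icc_right hmem.1.2)) ⟨ha, hlt⟩
  exact (hbefore s (Ioo_subset_Ico_self hs)).ne hfs

theorem HasDerivAt.nonpos_of_forall_Ioo_le {w : ℝ → ℝ} {d a t : ℝ} (hd : HasDerivAt w d t)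
    (ha : a < t) (h : ∀ s ∈ Ioo a t, w t ≤ w s) : d ≤ 0 := by
  refine le_of_tendsto (hasDerivAt_iff_tendsto_slope_left_right.1 hd).1 ?_
  filter_upwards [Ioo_mem_nhdsLT ha] with s hs
  rw [slope_def_field]
  exact div_nonpos_of_nonneg_of_nonpos (sub_nonneg.2 (h s hs)) (sub_nonpos.2 hs.2.le)

theorem pos_of_hasDerivAt_of_deriv_pos_of_eq_zero {w w' : ℝ → ℝ} {a b : ℝ}
    (hw : ∀ s ∈ Icc a b, HasDerivAt w (w' s) s) (ha : w a = 0)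
    (h : ∀ s ∈ Icc a b, w s = 0 → 0 < w' s) : ∀ t ∈ Ioc a b, 0 < w t := by
  have hnonneg : ∀ s ∈ Icc a b, 0 ≤ w s :=
    image_le_of_deriv_right_lt_deriv_boundary' (f' := 0) continuousOn_const
      (fun _ _ => hasDerivWithinAt_const _ _ _) ha.ge
      (fun s hs => (hw s hs).continuousAt.continuousWithinAt)
      (fun s hs => (hw s (Ico_subset_Icc_self hs)).hasDerivWithinAt)
      (fun s hs hs0 => h s (Ico_subset_Icc_self hs) hs0.symm)
  intro t ht
  refine (hnonneg t (Ioc_subset_Icc_self ht)).lt_of_ne fun ht0 => ?_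
  have hmem : t ∈ Icc a b := Ioc_subset_Icc_self ht
  refine (h t hmem ht0.symm).not_ge ((hw t hmem).nonpos_of_forall_Ioo_le ht.1 fun s hs => ?_)
  rw [← ht0]
  exact hnonneg s ⟨hs.1.le, hs.2.le.trans ht.2⟩

theorem Real.sin_lt_cos_of_mem_Ioo {y : ℝ} (hy : y ∈ Ioo (-(3 * π / 4)) (π / 4)) :
    sin y < cos y := by
  have h : 0 < cos (y + π / 4) := cos_pos_of_mem_Ioo ⟨by linarith [hy.1], by linarith [hy.2]⟩
  rw [cos_add, cos_pi_div_four, sin_pi_div_four, ← sub_mul] at h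
  exact sub_pos.1 (pos_of_mul_pos_left h (by positivity))

theorem Real.sub_cos_le_neg_one {x : ℝ} (hx : x ≤ 0) : x - cos x ≤ -1 := by
  have h := abs_cos_sub_cos_le x 0
  rw [cos_zero, sub_zero, abs_of_nonpos hx] at h
  linarith [neg_abs_le (cos x - 1)]

theorem Real.pi_div_two_sub_one_lt_sin_pi_div_four : π / 2 - 1 < sin (π / 4) := by
  have hsqrt : (1.4 : ℝ) < √2 := by
    rw [Real.lt_sqrt (by norm_num)]; norm_num
  rw [sin_pi_div_four]
  linarith [pi_lt_d2]

theorem bounds_of_mem_closure_prismD {p : ℝ × ℝ × ℝ} (hp : p ∈ closure prismD) :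
    -(π / 2) ≤ p.1 + p.2.1 ∧ p.1 ≤ 0 ∧ 0 ≤ p.2.2 ∧ p.2.2 ≤ π / 2 := by
  refine show p ∈ {q : ℝ × ℝ × ℝ | -(π / 2) ≤ q.1 + q.2.1 ∧ q.1 ≤ 0 ∧ 0 ≤ q.2.2 ∧
    q.2.2 ≤ π / 2} from closure_minimal ?_ ?_ hp
  · rintro ⟨a, b, c⟩ ⟨⟨h1, -, h3⟩, h4, h5⟩
    exact ⟨h1.le, h3.le, h4.le, h5.le⟩
  · simp only [ofPred_and]
    refine (isClosed_le ?_ ?_).inter ((isClosed_le ?_ ?_).inter ((isClosed_le ?_ ?_).inter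
      (isClosed_le ?_ ?_))) <;> fun_prop

namespace IsABCSol

variable {x y z : ℝ → ℝ}

theorem hasDerivAt_sin_add_cos_sub (h : IsABCSol x y z) (t : ℝ) :
    HasDerivAt (fun s => sin (y s) + cos (x s) - x s)
      (cos (y t) * (cos (z t) - 1) - (1 + sin (x t)) * sin (z t)) t := by
  have hK := (((h t).2.1.sin).add (h t).1.cos).sub (h t).1
  exact hK.congr_deriv (by ring)

theorem y_lt_pi_div_four (h : IsABCSol x y z) (hx0 : x 0 = -(π / 2)) (hy0 : y 0 = 0)
    {T : ℝ} (hD : ∀ t ∈ Icc 0 T, (x t, y t, z t) ∈ closure prismD) :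
    ∀ t ∈ Icc 0 T, y t < π / 4 := by
  refine ContinuousOn.forall_lt_of_forall_ne (fun t _ => (h t).2.1.continuousAt.continuousWithinAt)
    (by rw [hy0]; positivity) fun t ht hbefore hyt => ?_
  have hanti : AntitoneOn (fun s => sin (y s) + cos (x s) - x s) (Icc 0 t) := by
    refine antitoneOn_of_hasDerivWithinAt_nonpos (convex_Icc 0 t)
      (fun s _ => (h.hasDerivAt_sin_add_cos_sub s).continuousAt.continuousWithinAt)
      (fun s _ => (h.hasDerivAt_sin_add_cos_sub s).hasDerivWithinAt) fun s hs => ?_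
    rw [interior_Icc] at hs
    obtain ⟨hxy, hx, hz0, hzpi⟩ :=
      bounds_of_mem_closure_prismD (hD s ⟨hs.1.le, hs.2.le.trans ht.2⟩)
    have hcy : 0 ≤ cos (y s) :=
      cos_nonneg_of_mem_Icc ⟨by linarith, by linarith [hbefore s ⟨hs.1.le, hs.2⟩, pi_pos]⟩
    have hsz : 0 ≤ sin (z s) := sin_nonneg_of_nonneg_of_le_pi hz0 (by linarith [pi_pos])
    nlinarith [cos_le_one (z s), neg_one_le_sin (x s)]
  have hKt := hanti (left_mem_Icc.2 ht.1.le) (right_mem_Icc.2 ht.1.le) ht.1.le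
  simp only [hx0, hy0, hyt, sin_zero, cos_neg, cos_pi_div_two] at hKt
  have hx : x t ≤ 0 := (bounds_of_mem_closure_prismD (hD t ⟨ht.1.le, ht.2⟩)).2.1
  linarith [sub_cos_le_neg_one hx, pi_div_two_sub_one_lt_sin_pi_div_four]

end IsABCSol

theorem stmt7_general (x y z : ℝ → ℝ) (h : IsABCSol x y z)
    (hx0 : x 0 = -(π / 2)) (hy0 : y 0 = 0) (hz0 : z 0 = 0)
    (T : ℝ) (hD : ∀ t ∈ Set.Icc 0 T, (x t, y t, z t) ∈ closure prismD) :
    ∀ t ∈ Set.Ioc 0 T, x t + π / 2 > z t := by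
  intro t ht
  have hy := h.y_lt_pi_div_four hx0 hy0 hD
  refine sub_pos.1 (pos_of_hasDerivAt_of_deriv_pos_of_eq_zero (w := fun s => x s + π / 2 - z s)
    (fun s _ => ((h s).1.add_const _).sub (h s).2.2) (by simp [hx0, hz0]) (fun s hs hs0 => ?_) t ht)
  obtain ⟨hxy, hx, -, -⟩ := bounds_of_mem_closure_prismD (hD s hs)
  rw [show z s = x s + π / 2 by linarith, sin_add_pi_div_two]
  linarith [sin_lt_cos_of_mem_Ioo ⟨by linarith [pi_pos], hy s hs⟩]

theorem stmt7 (x y z : ℝ → ℝ) (h : IsABCSol x y z)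
    (hx0 : x 0 = -(π / 2)) (hy0 : y 0 = 0) (hz0 : z 0 = 0)
    (T : ℝ) (hT : 0 < T) (hD : ∀ t ∈ Set.Icc 0 T, (x t, y t, z t) ∈ closure prismD) :
    ∀ t ∈ Set.Ioc 0 T, x t + π / 2 > z t :=
  stmt7_general x y z h hx0 hy0 hz0 T hD
end

section
/- Let X = (x, y, z) : ℝ → ℝ³ be a solution of the 1-1-1 ABC flow system with X(0) = (-π/2, 0, a) for some a ∈ [0, π/2). Then there exists ε > 0 such that X(t) ∈ D for all t ∈ (0, ε). -/
/-!
The starting point `(-π/2, 0, a)` lies on two faces of `D̄`: the face `x + y = -π/2` of the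
triangle and, when `a = 0`, the bottom `z = 0`. The remaining three inequalities defining `D`
are strict at `t = 0` and persist by continuity. Across the first face the flow points inward:
`(x + y)'(0) = sin a + cos a > 0`. On the bottom face `z'(0) = sin 0 + cos (-π/2) = 0`, but
`z''(0) = sin a + cos a > 0` as well, so `z' > 0` and hence `z > a ≥ 0` just after `t = 0`.
-/

open Real Set Filter

open Topology

lemma one_le_sin_add_cos {a : ℝ} (ha : a ∈ Icc 0 (π / 2)) : 1 ≤ sin a + cos a := by
  have hsin : 0 ≤ sin a := sin_nonneg_of_nonneg_of_le_pi ha.1 (by linarith [ha.2, pi_pos])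
  have hcos : 0 ≤ cos a := cos_nonneg_of_mem_Icc ⟨by linarith [ha.1, pi_pos], ha.2⟩
  nlinarith [sin_sq_add_cos_sq a]

lemma HasDerivAt.eventually_nhdsGT_lt {f : ℝ → ℝ} {f' a : ℝ} (hf : HasDerivAt f f' a)
    (hf' : 0 < f') : ∀ᶠ t in 𝓝[>] a, f a < f t := by
  have hslope : ∀ᶠ t in 𝓝[≠] a, 0 < slope f a t :=
    (hasDerivAt_iff_tendsto_slope.mp hf).eventually (eventually_gt_nhds hf')
  filter_upwards [nhdsGT_le_nhdsNE a hslope, self_mem_nhdsWithin] with t ht (hat : a < t)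
  exact (slope_pos_iff hat).mp ht

lemma eventually_nhdsGT_lt_of_hasDerivAt {f g : ℝ → ℝ} {a : ℝ}
    (hf : ∀ t, HasDerivAt f (g t) t) (hg : ∀ᶠ t in 𝓝[>] a, 0 < g t) :
    ∀ᶠ t in 𝓝[>] a, f a < f t := by
  obtain ⟨b, hab, hgpos⟩ := mem_nhdsGT_iff_exists_Ioo_subset.mp hg
  have hmono : StrictMonoOn f (Icc a b) := by
    refine strictMonoOn_of_deriv_pos (convex_Icc a b)
      (fun t _ ↦ (hf t).continuousAt.continuousWithinAt) fun t ht ↦ ?_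
    rw [(hf t).deriv]
    exact hgpos (by rwa [interior_Icc] at ht)
  filter_upwards [Ioo_mem_nhdsGT hab] with t ht
  exact hmono (left_mem_Icc.mpr hab.le) (Ioo_subset_Icc_self ht) ht.1

namespace IsABCSol

variable {x y z : ℝ → ℝ} {a : ℝ}

lemma eventually_neg_pi_div_two_lt_add (h : IsABCSol x y z) (ha : a ∈ Icc 0 (π / 2))
    (hx0 : x 0 = -(π / 2)) (hy0 : y 0 = 0) (hz0 : z 0 = a) :
    ∀ᶠ t in 𝓝[>] 0, -(π / 2) < x t + y t := by
  have hderiv := (h 0).1.add (h 0).2.1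
  rw [hx0, hy0, hz0, cos_zero, sin_neg, sin_pi_div_two] at hderiv
  have hpos : 0 < sin a + 1 + (-1 + cos a) := by linarith [one_le_sin_add_cos ha]
  simpa [hx0, hy0] using hderiv.eventually_nhdsGT_lt hpos

lemma eventually_lt_z (h : IsABCSol x y z) (ha : a ∈ Icc 0 (π / 2))
    (hx0 : x 0 = -(π / 2)) (hy0 : y 0 = 0) (hz0 : z 0 = a) :
    ∀ᶠ t in 𝓝[>] 0, a < z t := by
  have hderiv₂ := (h 0).2.1.sin.add (h 0).1.cos
  rw [hx0, hy0, hz0, cos_zero, sin_neg, sin_pi_div_two] at hderiv₂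
  have hpos : 0 < 1 * (-1 + cos a) + -(-1) * (sin a + 1) := by
    linarith [one_le_sin_add_cos ha]
  have hderiv_pos : ∀ᶠ t in 𝓝[>] 0, 0 < sin (y t) + cos (x t) := by
    simpa [hx0, hy0] using hderiv₂.eventually_nhdsGT_lt hpos
  simpa [hz0] using eventually_nhdsGT_lt_of_hasDerivAt (fun t ↦ (h t).2.2) hderiv_pos

end IsABCSol

theorem stmt9 (x y z : ℝ → ℝ) (h : IsABCSol x y z) (a : ℝ) (ha : a ∈ Set.Ico 0 (π / 2))
    (hx0 : x 0 = -(π / 2)) (hy0 : y 0 = 0) (hz0 : z 0 = a) :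
    ∃ ε > (0 : ℝ), ∀ t ∈ Set.Ioo 0 ε, (x t, y t, z t) ∈ prismD := by
  have hx := (h 0).1.continuousAt
  have hy := (h 0).2.1.continuousAt
  have hz := (h 0).2.2.continuousAt
  have hdiff : ∀ᶠ t in 𝓝 0, y t - x t < 3 * π / 2 :=
    (hy.sub hx).eventually_lt continuousAt_const (by rw [Pi.sub_apply, hx0, hy0]; linarith [pi_pos])
  have hxneg : ∀ᶠ t in 𝓝 0, x t < 0 :=
    hx.eventually_lt continuousAt_const (by simp [hx0, pi_pos])
  have hzlt : ∀ᶠ t in 𝓝 0, z t < π / 2 :=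
    hz.eventually_lt continuousAt_const (by simpa [hz0] using ha.2)
  have hprism : ∀ᶠ t in 𝓝[>] 0, (x t, y t, z t) ∈ prismD := by
    filter_upwards [h.eventually_neg_pi_div_two_lt_add (Ico_subset_Icc_self ha) hx0 hy0 hz0,
      nhdsWithin_le_nhds hdiff, nhdsWithin_le_nhds hxneg, nhdsWithin_le_nhds hzlt,
      h.eventually_lt_z (Ico_subset_Icc_self ha) hx0 hy0 hz0] with t hsum hdiff hxneg hzlt hgtz
    exact ⟨⟨hsum, hdiff, hxneg⟩, ha.1.trans_lt hgtz, hzlt⟩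
  obtain ⟨ε, hε, hsub⟩ := mem_nhdsGT_iff_exists_Ioo_subset.mp hprism
  exact ⟨ε, hε, fun t ht ↦ hsub ht⟩
end

section
/- Let X = (x, y, z) : ℝ → ℝ³ be a solution of the 1-1-1 ABC flow system with X(0) = (-π/2, 0, a) for some a ∈ [0, π/2), and let T > 0 be such that X(t) ∈ D̄ for all t ∈ [0, T]. Then for every t ∈ (0, T] one has z(t) > 0, x(t) + y(t) > -π/2, and y(t) - x(t) < 3π/2; consequently, if X(T) ∈ ∂D then x(T) = 0 or z(T) = π/2. -/
open Real Set Filter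

/-!
The faces `x + y = -π/2` and `z = 0` of `D̄` and its edge `y - x = 3π/2, z = π/2` are crossed
strictly inward by the ABC field: on `x + y = -π/2` the sum `x + y` has derivative
`sin z + cos z > 0`, on `z = 0` the derivative of `z` is `sin y + cos x > 0`, and on the edge the
difference `x - y` has derivative `1`. If a trajectory staying in `D̄` touched one of them at a time
`t > 0`, the corresponding function would attain its minimum over `[0, t]` at `t`, forcing a
nonpositive derivative there.

On `D̄` the face `y - x = 3π/2` is larger than that edge; it is cut down to it by the invariant
`y - x - 2z ≤ π/2`, which holds at time `0` (value `π/2 - 2a`) and persists because the field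
crosses the plane `y - x - 2z = π/2` downward at every point of `D̄`.
-/

theorem HasDerivAt.nonpos_of_isMinOn_Icc {f : ℝ → ℝ} {f' a b : ℝ} (hf : HasDerivAt f f' b)
    (hab : a < b) (hmin : IsMinOn f (Icc a b) b) : f' ≤ 0 := by
  have hcone : a - b ∈ posTangentConeAt (Icc a b) b :=
    sub_mem_posTangentConeAt_of_segment_subset (by rw [segment_symm, segment_eq_Icc hab.le])
  have := hmin.localize.hasFDerivWithinAt_nonneg hf.hasFDerivAt.hasFDerivWithinAt hcone
  rw [ContinuousLinearMap.toSpanSingleton_apply, smul_eq_mul] at this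
  nlinarith

theorem lt_of_hasDerivAt_of_le_on_Icc {g : ℝ → ℝ} {g' a b c : ℝ} (hab : a < b)
    (hg : HasDerivAt g g' b) (hle : ∀ t ∈ Icc a b, c ≤ g t) (hpos : g b = c → 0 < g') :
    c < g b := by
  refine (hle b ⟨hab.le, le_rfl⟩).lt_of_ne fun hb => ?_
  have hmin : IsMinOn g (Icc a b) b := fun t ht => hb ▸ hle t ht
  exact (hpos hb.symm).not_ge (hg.nonpos_of_isMinOn_Icc hab hmin)

theorem sin_add_cos_pos {w : ℝ} (hw₀ : 0 ≤ w) (hw₁ : w ≤ π / 2) : 0 < sin w + cos w := by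
  have hs := sin_nonneg_of_nonneg_of_le_pi hw₀ (by linarith [pi_pos])
  have hc := cos_nonneg_of_mem_Icc ⟨by linarith [pi_pos], hw₁⟩
  nlinarith [sin_sq_add_cos_sq w]

theorem abc_deriv_add_pos {x y z : ℝ} (hxy : x + y = -(π / 2)) (hz₀ : 0 ≤ z) (hz₁ : z ≤ π / 2) :
    0 < sin z + cos y + (sin x + cos z) := by
  have hy : cos y = -sin x := by
    rw [show y = -(x + π / 2) by linarith, cos_neg, cos_add_pi_div_two]
  linarith [sin_add_cos_pos hz₀ hz₁]

theorem abc_deriv_sub_pos {x y z : ℝ} (hyx : y - x = 3 * π / 2) (hz : z = π / 2) :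
    0 < sin z + cos y - (sin x + cos z) := by
  have hy : cos y = sin x := by
    rw [show y = x - π / 2 + 2 * π by linarith, cos_add_two_pi, cos_sub_pi_div_two]
  rw [hy, hz, sin_pi_div_two, cos_pi_div_two]
  norm_num

theorem abc_deriv_z_pos {x y : ℝ} (hxy : -(π / 2) < x + y) (hyx : y - x < 3 * π / 2) (hx : x ≤ 0) :
    0 < sin y + cos x := by
  rw [← sin_add_pi_div_two, sin_add_sin]
  have hpi := pi_pos
  have hsin : 0 < sin ((y + (x + π / 2)) / 2) := sin_pos_of_pos_of_lt_pi (by linarith) (by linarith)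
  have hcos : 0 < cos ((y - (x + π / 2)) / 2) := cos_pos_of_mem_Ioo ⟨by linarith, by linarith⟩
  positivity

theorem cos_mul_add_sin_sub_cos_pos {u w : ℝ} (hu : 0 ≤ u) (hw₀ : 0 ≤ w) (hw₁ : w ≤ π / 2)
    (huw₀ : -(π / 2) ≤ u - w) (huw₁ : u - w ≤ π / 2) :
    0 < cos w * (4 * sin u + 2 * cos u) + sin w - cos w := by
  have hpi := pi_pos
  have hs : 0 ≤ sin u := sin_nonneg_of_nonneg_of_le_pi hu (by linarith)
  have hS : 0 ≤ sin w := sin_nonneg_of_nonneg_of_le_pi hw₀ (by linarith)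
  have hC : 0 ≤ cos w := cos_nonneg_of_mem_Icc ⟨by linarith, hw₁⟩
  have hcos : 0 ≤ sin u * sin w + cos u * cos w := by
    rw [add_comm, ← cos_sub]; exact cos_nonneg_of_mem_Icc ⟨huw₀, huw₁⟩
  have hu1 := sin_sq_add_cos_sq u
  have hw1 := sin_sq_add_cos_sq w
  generalize sin u = s, cos u = c, sin w = S, cos w = C at *
  rcases le_or_gt 0 c with hc | hc
  · have hs1 : 1 - c ≤ s := by nlinarith
    have hSC : 1 ≤ S + C := by nlinarith [mul_nonneg hS hC]
    nlinarith
  rcases hC.eq_or_lt with hC0 | hC0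
  · have hS1 : S = 1 := by nlinarith
    nlinarith
  have hs0 : 0 < s := by nlinarith
  have key : 0 < 4 * s ^ 2 + 2 * s * c - c - s := by
    nlinarith [sq_nonneg (s + c), sq_nonneg (s - c), sq_nonneg (2 * s - 1)]
  have h3 : 0 < s * (C * (4 * s + 2 * c) + S - C) := by nlinarith [mul_pos hC0 key]
  nlinarith

theorem abc_deriv_wedge_neg {x y z : ℝ} (hy : y - x - 2 * z = π / 2) (hxy : -(π / 2) ≤ x + y)
    (hx : x ≤ 0) (hz₀ : 0 ≤ z) (hz₁ : z ≤ π / 2) :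
    sin x + cos z - (sin z + cos y) - 2 * (sin y + cos x) < 0 := by
  have key := cos_mul_add_sin_sub_cos_pos (u := x + z + π / 2) (w := z)
    (by linarith) hz₀ hz₁ (by linarith) (by linarith)
  have hx' : x = (x + z + π / 2) - z - π / 2 := by ring
  have hy' : y = (x + z + π / 2) + z := by linarith
  generalize x + z + π / 2 = u at key hx' hy'
  subst hx' hy'
  simp only [sin_add, cos_add, sin_sub, cos_sub, sin_pi_div_two, cos_pi_div_two] at key ⊢
  linarith

def closedPrismD : Set (ℝ × ℝ × ℝ) :=
  {p | -(π / 2) ≤ p.1 + p.2.1 ∧ p.2.1 - p.1 ≤ 3 * π / 2 ∧ p.1 ≤ 0 ∧ 0 ≤ p.2.2 ∧ p.2.2 ≤ π / 2}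

theorem isOpen_triR : IsOpen triR := by
  simp only [triR, ofPred_and]
  refine .inter ?_ (.inter ?_ ?_) <;> exact isOpen_lt (by fun_prop) (by fun_prop)

theorem isOpen_prismD : IsOpen prismD := by
  simp only [prismD, ofPred_and]
  refine .inter (isOpen_triR.preimage (f := fun p : ℝ × ℝ × ℝ => (p.1, p.2.1)) (by fun_prop))
    (.inter ?_ ?_) <;> exact isOpen_lt (by fun_prop) (by fun_prop)

theorem isClosed_closedPrismD : IsClosed closedPrismD := by
  simp only [closedPrismD, ofPred_and]
  refine .inter ?_ (.inter ?_ (.inter ?_ (.inter ?_ ?_))) <;>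
    exact isClosed_le (by fun_prop) (by fun_prop)

theorem closure_prismD_subset_s10 : closure prismD ⊆ closedPrismD :=
  closure_minimal (fun _ ⟨⟨h₁, h₂, h₃⟩, h₄, h₅⟩ => ⟨h₁.le, h₂.le, h₃.le, h₄.le, h₅.le⟩)
    isClosed_closedPrismD

theorem eq_zero_or_eq_of_mem_frontier_prismD {p : ℝ × ℝ × ℝ} (hp : p ∈ frontier prismD)
    (hxy : -(π / 2) < p.1 + p.2.1) (hyx : p.2.1 - p.1 < 3 * π / 2) (hz : 0 < p.2.2) :
    p.1 = 0 ∨ p.2.2 = π / 2 := by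
  obtain ⟨hcl, hint⟩ := hp
  rw [isOpen_prismD.interior_eq] at hint
  obtain ⟨-, -, hx, -, hz'⟩ := closure_prismD_subset_s10 hcl
  by_contra! hne
  exact hint ⟨⟨hxy, hyx, hx.lt_of_ne hne.1⟩, hz, hz'.lt_of_ne hne.2⟩

namespace IsABCSol

variable {x y z : ℝ → ℝ} {T : ℝ}

theorem neg_pi_div_two_lt_add (h : IsABCSol x y z)
    (hD : ∀ t ∈ Icc 0 T, (x t, y t, z t) ∈ closedPrismD) :
    ∀ t ∈ Ioc 0 T, -(π / 2) < x t + y t := by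
  rintro t ⟨ht₀, htT⟩
  obtain ⟨-, -, -, hz₀, hz₁⟩ := hD t ⟨ht₀.le, htT⟩
  exact lt_of_hasDerivAt_of_le_on_Icc (g := fun s => x s + y s) ht₀ ((h t).1.add (h t).2.1)
    (fun s hs => (hD s ⟨hs.1, hs.2.trans htT⟩).1) fun hxy => abc_deriv_add_pos hxy hz₀ hz₁

theorem sub_sub_two_mul_le (h : IsABCSol x y z)
    (hD : ∀ t ∈ Icc 0 T, (x t, y t, z t) ∈ closedPrismD) (h₀ : y 0 - x 0 - 2 * z 0 ≤ π / 2) :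
    ∀ t ∈ Icc 0 T, y t - x t - 2 * z t ≤ π / 2 := by
  have hd : ∀ t, HasDerivAt (fun s => y s - x s - 2 * z s)
      (sin (x t) + cos (z t) - (sin (z t) + cos (y t)) - 2 * (sin (y t) + cos (x t))) t :=
    fun t => ((h t).2.1.sub (h t).1).sub ((h t).2.2.const_mul 2)
  refine image_le_of_deriv_right_lt_deriv_boundary'
    (fun t _ => (hd t).continuousAt.continuousWithinAt) (fun t _ => (hd t).hasDerivWithinAt) h₀
    continuousOn_const (fun _ _ => hasDerivWithinAt_const _ _ _) fun t ht heq => ?_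
  obtain ⟨hxy, -, hx, hz₀, hz₁⟩ := hD t (Ico_subset_Icc_self ht)
  exact abc_deriv_wedge_neg heq hxy hx hz₀ hz₁

theorem sub_lt (h : IsABCSol x y z) (hD : ∀ t ∈ Icc 0 T, (x t, y t, z t) ∈ closedPrismD)
    (hwedge : ∀ t ∈ Icc 0 T, y t - x t - 2 * z t ≤ π / 2) :
    ∀ t ∈ Ioc 0 T, y t - x t < 3 * π / 2 := by
  rintro t ⟨ht₀, htT⟩
  obtain ⟨-, -, -, -, hz₁⟩ := hD t ⟨ht₀.le, htT⟩
  have := lt_of_hasDerivAt_of_le_on_Icc (g := fun s => x s - y s) (c := -(3 * π / 2)) ht₀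
    ((h t).1.sub (h t).2.1) (fun s hs => by linarith [(hD s ⟨hs.1, hs.2.trans htT⟩).2.1]) fun hxy =>
      abc_deriv_sub_pos (by linarith) (by linarith [hwedge t ⟨ht₀.le, htT⟩])
  linarith

theorem z_pos (h : IsABCSol x y z) (hD : ∀ t ∈ Icc 0 T, (x t, y t, z t) ∈ closedPrismD)
    (hxy : ∀ t ∈ Ioc 0 T, -(π / 2) < x t + y t) (hyx : ∀ t ∈ Ioc 0 T, y t - x t < 3 * π / 2) :
    ∀ t ∈ Ioc 0 T, 0 < z t := by
  rintro t ⟨ht₀, htT⟩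
  obtain ⟨-, -, hx, -, -⟩ := hD t ⟨ht₀.le, htT⟩
  exact lt_of_hasDerivAt_of_le_on_Icc ht₀ (h t).2.2
    (fun s hs => (hD s ⟨hs.1, hs.2.trans htT⟩).2.2.2.1) fun _ =>
      abc_deriv_z_pos (hxy t ⟨ht₀, htT⟩) (hyx t ⟨ht₀, htT⟩) hx

end IsABCSol

theorem stmt10 (x y z : ℝ → ℝ) (h : IsABCSol x y z) (a : ℝ) (ha : a ∈ Set.Ico 0 (π / 2))
    (hx0 : x 0 = -(π / 2)) (hy0 : y 0 = 0) (hz0 : z 0 = a)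
    (T : ℝ) (hT : 0 < T) (hD : ∀ t ∈ Set.Icc 0 T, (x t, y t, z t) ∈ closure prismD) :
    (∀ t ∈ Set.Ioc 0 T,
        0 < z t ∧ x t + y t > -(π / 2) ∧ y t - x t < 3 * π / 2) ∧
      ((x T, y T, z T) ∈ frontier prismD → x T = 0 ∨ z T = π / 2) := by
  have hD' : ∀ t ∈ Icc 0 T, (x t, y t, z t) ∈ closedPrismD :=
    fun t ht => closure_prismD_subset_s10 (hD t ht)
  have hwedge := h.sub_sub_two_mul_le hD' (by rw [hx0, hy0, hz0]; linarith [ha.1])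
  have hxy := h.neg_pi_div_two_lt_add hD'
  have hyx := h.sub_lt hD' hwedge
  have hz := h.z_pos hD' hxy hyx
  have hTT : T ∈ Ioc 0 T := ⟨hT, le_rfl⟩
  exact ⟨fun t ht => ⟨hz t ht, hxy t ht, hyx t ht⟩,
    fun hfr => eq_zero_or_eq_of_mem_frontier_prismD hfr (hxy T hTT) (hyx T hTT) (hz T hTT)⟩
end

section
/- Let X = (x, y, z) : ℝ → ℝ³ be a solution of the 1-1-1 ABC flow system with x(0) = -π/2 and y(0) = 0. Then for every t ∈ ℝ one has x(-t) = -π - x(t), y(-t) = -y(t), and z(-t) = z(t). -/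
/-!
The affine involution `σ (x, y, z) = (-π - x, -y, z)` is a reversing symmetry of the 1-1-1 ABC
field `v`: its linear part `L` satisfies `L (v p) = -v (σ p)`. Hence for any solution `X`, the curve
`t ↦ σ (X (-t))` is again a solution. When `X 0` is fixed by `σ`, which is exactly the condition
`x 0 = -π/2`, `y 0 = 0`, both curves start at the same point, and uniqueness of solutions for the
globally Lipschitz field `v` gives `X (-t) = σ (X t)`.
-/

open Real Set Filter

theorem ODE_solution_apply_neg_of_reversing {E : Type*} [NormedAddCommGroup E]
    [NormedSpace ℝ E] {v σ : E → E} {σ' : E → E →L[ℝ] E} {K : NNReal}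
    (hv : LipschitzWith K v) (hσ : ∀ p, HasFDerivAt σ (σ' p) p)
    (hrev : ∀ p, σ' p (v p) = -v (σ p)) {f : ℝ → E}
    (hf : ∀ t, HasDerivAt f (v (f t)) t) (h₀ : σ (f 0) = f 0) (t : ℝ) :
    f (-t) = σ (f t) := by
  have hg : ∀ s, HasDerivAt (fun s ↦ σ (f (-s))) (v (σ (f (-s)))) s := fun s ↦ by
    have := (hσ (f (-s))).comp_hasDerivAt s ((hf (-s)).scomp s (hasDerivAt_neg s))
    simpa [Function.comp_def, hrev] using this
  have := ODE_solution_unique_univ (v := fun _ ↦ v) (s := fun _ ↦ univ) (t₀ := 0)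
    (fun _ ↦ hv.lipschitzOnWith) (fun s ↦ ⟨hg s, trivial⟩) (fun s ↦ ⟨hf s, trivial⟩)
    (by simpa using h₀)
  simpa using (congrFun this (-t)).symm

noncomputable def abcField (p : ℝ × ℝ × ℝ) : ℝ × ℝ × ℝ :=
  (sin p.2.2 + cos p.2.1, sin p.1 + cos p.2.2, sin p.2.1 + cos p.1)

theorem lipschitzWith_abcField : LipschitzWith 2 abcField := by
  have h₁ : LipschitzWith 1 (fun p : ℝ × ℝ × ℝ ↦ p.1) := LipschitzWith.prod_fst
  have h₂ : LipschitzWith 1 (fun p : ℝ × ℝ × ℝ ↦ p.2.1) := by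
    simpa [Function.comp_def] using LipschitzWith.prod_fst.comp LipschitzWith.prod_snd
  have h₃ : LipschitzWith 1 (fun p : ℝ × ℝ × ℝ ↦ p.2.2) := by
    simpa [Function.comp_def] using LipschitzWith.prod_snd.comp LipschitzWith.prod_snd
  have hsc {f g : ℝ × ℝ × ℝ → ℝ} (hf : LipschitzWith 1 f) (hg : LipschitzWith 1 g) :
      LipschitzWith 2 (fun p ↦ sin (f p) + cos (g p)) := by
    simpa [one_add_one_eq_two] using (lipschitzWith_sin.comp hf).add (lipschitzWith_cos.comp hg)
  exact ((hsc h₃ h₂).prodMk ((hsc h₁ h₃).prodMk (hsc h₂ h₁))).weaken (by simp)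

theorem IsABCSol.hasDerivAt {x y z : ℝ → ℝ} (h : IsABCSol x y z) (t : ℝ) :
    HasDerivAt (fun t ↦ (x t, y t, z t)) (abcField (x t, y t, z t)) t :=
  (h t).1.prodMk ((h t).2.1.prodMk (h t).2.2)

noncomputable def abcReflection (p : ℝ × ℝ × ℝ) : ℝ × ℝ × ℝ := (-π - p.1, -p.2.1, p.2.2)

def abcReflectionLinear : ℝ × ℝ × ℝ →L[ℝ] ℝ × ℝ × ℝ :=
  (-ContinuousLinearMap.id ℝ ℝ).prodMap ((-ContinuousLinearMap.id ℝ ℝ).prodMap (.id ℝ ℝ))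

theorem hasFDerivAt_abcReflection (p : ℝ × ℝ × ℝ) :
    HasFDerivAt abcReflection abcReflectionLinear p := by
  have : abcReflection = fun p ↦ abcReflectionLinear p + (-π, 0, 0) := by
    ext p <;> simp [abcReflection, abcReflectionLinear, sub_eq_neg_add]
  rw [this]
  exact abcReflectionLinear.hasFDerivAt.add_const _

theorem abcReflectionLinear_abcField (p : ℝ × ℝ × ℝ) :
    abcReflectionLinear (abcField p) = -abcField (abcReflection p) := by
  have hsin : sin (-π - p.1) = sin p.1 := by simp [sub_eq_add_neg, sin_add]
  have hcos : cos (-π - p.1) = -cos p.1 := by simp [sub_eq_add_neg, cos_add]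
  ext <;> simp [abcField, abcReflection, abcReflectionLinear, hsin, hcos, add_comm]

theorem stmt15 (x y z : ℝ → ℝ) (h : IsABCSol x y z)
    (hx0 : x 0 = -(π / 2)) (hy0 : y 0 = 0) :
    ∀ t : ℝ, x (-t) = -π - x t ∧ y (-t) = -y t ∧ z (-t) = z t := by
  have h₀ : abcReflection (x 0, y 0, z 0) = (x 0, y 0, z 0) := by
    simp only [abcReflection, hx0, hy0, neg_zero, Prod.mk.injEq, and_true]
    ring
  intro t
  simpa [abcReflection] using ODE_solution_apply_neg_of_reversing lipschitzWith_abcField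
    hasFDerivAt_abcReflection abcReflectionLinear_abcField h.hasDerivAt h₀ t
end
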